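/- Let arc be the arcsine distribution on [-π,π] and let h(t) = m sin(πt) for m ∈ [0,1]. Define J(h) = (1/2)∫₀¹ D_arc(s(t))√(1 - h(t)²) dt with s(t) = h'(t)/√(1 - h(t)²) and D_arc(c) = (2/π)(c arcsin(c/π) + √(π² - c²)). Then J(h) = 1 for every m ∈ [0,1]. -/

import Mathlib

/-!
With `a = m cos πt` and `q = 1 - m² sin² πt = a² + (1 - m²)`, the integrand is
`D_arc(π a / √q) √q = 2 a arcsin(a / √q) + 2 √(1 - m²)`.
For `m < 1` put `k = √(1 - m²)` and `b = m / k`; then `arcsin(a / √q) = arctan(b cos πt)`, so the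
integrand is `2k (b cos πt · arctan(b cos πt) + 1)`. An integration by parts together with the
classical `∫₀^π dx / (1 + b² cos² x) = π / √(1 + b²)` gives
`∫₀¹ b cos πt · arctan(b cos πt) dt = √(1 + b²) - 1 = 1/k - 1`, hence `J = k · (1/k) = 1`.
For `m = 1` the integrand is `π |cos πt|`, whose integral over `[0, 1]` is `2`.
-/

open MeasureTheory Real

/-- `D` for the arcsine distribution on `[-π, π]`:
`D_arc(c) = (2/π) (c arcsin(c/π) + √(π² - c²))`. -/
noncomputable def Darc (c : ℝ) : ℝ :=
  (2 / π) * (c * Real.arcsin (c / π) + Real.sqrt (π ^ 2 - c ^ 2))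

lemma Darc_mul_sqrt (a q : ℝ) :
    Darc (π * a / √q) * √q = 2 * a * arcsin (a / √q) + 2 * √(q - a ^ 2) := by
  rcases le_or_gt q 0 with hq | hq
  · rw [sqrt_eq_zero'.2 hq, sqrt_eq_zero'.2 (by nlinarith)]
    simp
  have hs : 0 < √q := sqrt_pos.2 hq
  have harg : π * a / √q / π = a / √q := by field_simp
  have hroot : √(π ^ 2 - (π * a / √q) ^ 2) * √q = π * √(q - a ^ 2) := by
    rw [← sqrt_mul' _ hq.le, div_pow, sq_sqrt hq.le,
      show (π ^ 2 - (π * a) ^ 2 / q) * q = π ^ 2 * (q - a ^ 2) by field_simp,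
      sqrt_mul (sq_nonneg π), sqrt_sq pi_pos.le]
  unfold Darc
  rw [harg, mul_assoc, add_mul, hroot]
  field_simp

lemma arcsin_div_sqrt_sq_add_sq (a : ℝ) {p : ℝ} (hp : 0 < p) :
    arcsin (a / √(a ^ 2 + p ^ 2)) = arctan (a / p) := by
  rw [arctan_eq_arcsin, div_pow, one_add_div (pow_pos hp 2).ne', sqrt_div' _ (pow_nonneg hp.le 2),
    sqrt_sq hp.le, div_div_div_cancel_right₀ hp.ne', add_comm]

lemma mul_arcsin_div_abs (x : ℝ) : x * arcsin (x / |x|) = π / 2 * |x| := by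
  rcases lt_trichotomy x 0 with hx | rfl | hx
  · rw [abs_of_neg hx, div_neg, div_self hx.ne, arcsin_neg, arcsin_one]; ring
  · simp
  · rw [abs_of_pos hx, div_self hx.ne', arcsin_one]; ring

lemma integral_abs_cos_zero_pi : ∫ x in (0 : ℝ)..π, |cos x| = 2 := by
  have hc : Continuous fun x => |cos x| := by fun_prop
  rw [← intervalIntegral.integral_add_adjacent_intervals (b := π / 2)
    (hc.intervalIntegrable _ _) (hc.intervalIntegrable _ _)]
  have hleft : ∫ x in (0 : ℝ)..π / 2, |cos x| = ∫ x in (0 : ℝ)..π / 2, cos x := by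
    refine intervalIntegral.integral_congr fun x hx => abs_of_nonneg (cos_nonneg_of_mem_Icc ?_)
    rw [Set.uIcc_of_le (by positivity)] at hx
    exact ⟨by linarith [hx.1, pi_pos], hx.2⟩
  have hright : ∫ x in π / 2..π, |cos x| = ∫ x in π / 2..π, -cos x := by
    refine intervalIntegral.integral_congr fun x hx => abs_of_nonpos ?_
    rw [Set.uIcc_of_le (by linarith [pi_pos])] at hx
    exact cos_nonpos_of_pi_div_two_le_of_le hx.1 (by linarith [hx.2, pi_pos])
  rw [hleft, hright, intervalIntegral.integral_neg, integral_cos, integral_cos]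
  norm_num

lemma mul_cos_sq_add_sin_sq_pos {c : ℝ} (hc : 0 < c) (x : ℝ) : 0 < c * cos x ^ 2 + sin x ^ 2 := by
  rcases le_total c 1 with h | h <;>
    nlinarith [sin_sq_add_cos_sq x, sq_nonneg (sin x), sq_nonneg (cos x)]

/- On `(-π/2, π/2)` this antiderivative is `arctan (tan x / c)`, since
`tan (x - arctan (tan x / c)) = (c - 1) sin x cos x / (c cos² x + sin² x)`; unlike that
expression it is smooth on all of `ℝ`. -/
lemma hasDerivAt_sub_arctan {c : ℝ} (hc : 0 < c) (x : ℝ) :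
    HasDerivAt (fun x => x - arctan ((c - 1) * sin x * cos x / (c * cos x ^ 2 + sin x ^ 2)))
      (c / (c ^ 2 * cos x ^ 2 + sin x ^ 2)) x := by
  have hD := mul_cos_sq_add_sin_sq_pos hc x
  have hE := mul_cos_sq_add_sin_sq_pos (pow_pos hc 2) x
  have hpy := sin_sq_add_cos_sq x
  have hnum := ((hasDerivAt_sin x).const_mul (c - 1)).mul (hasDerivAt_cos x)
  have hden := (((hasDerivAt_cos x).pow 2).const_mul c).add ((hasDerivAt_sin x).pow 2)
  refine ((hasDerivAt_id x).sub ((hnum.div hden hD.ne').arctan)).congr_deriv ?_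
  simp only [Pi.mul_apply, Pi.div_apply, Pi.add_apply, Pi.pow_apply, Nat.cast_ofNat, pow_one,
    show 2 - 1 = 1 from rfl]
  rw [show 1 + ((c - 1) * sin x * cos x / (c * cos x ^ 2 + sin x ^ 2)) ^ 2
      = (c ^ 2 * cos x ^ 2 + sin x ^ 2) / (c * cos x ^ 2 + sin x ^ 2) ^ 2 by
    rw [div_pow, one_add_div (pow_pos hD 2).ne']
    congr 1
    linear_combination (c ^ 2 * cos x ^ 2 + sin x ^ 2) * hpy]
  field_simp
  linear_combination (c - (c - 1) * (c * cos x ^ 2 - sin x ^ 2)) * hpy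

lemma integral_one_div_one_add_sq_mul_cos_sq (b : ℝ) :
    ∫ x in (0 : ℝ)..π, 1 / (1 + b ^ 2 * cos x ^ 2) = π / √(1 + b ^ 2) := by
  set c := √(1 + b ^ 2)
  have hc : 0 < c := sqrt_pos.2 (by positivity)
  have hc2 : c ^ 2 = 1 + b ^ 2 := sq_sqrt (by positivity)
  have hderiv : ∀ x, HasDerivAt
      (fun x => x - arctan ((c - 1) * sin x * cos x / (c * cos x ^ 2 + sin x ^ 2)))
      (c * (1 / (1 + b ^ 2 * cos x ^ 2))) x := fun x =>
    (hasDerivAt_sub_arctan hc x).congr_deriv (by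
      rw [hc2, mul_one_div]; congr 1; linear_combination sin_sq_add_cos_sq x)
  have hint : ∫ x in (0 : ℝ)..π, c * (1 / (1 + b ^ 2 * cos x ^ 2)) = π := by
    rw [intervalIntegral.integral_eq_sub_of_hasDerivAt (fun x _ => hderiv x)
      (Continuous.intervalIntegrable (by fun_prop (disch := intro x; positivity)) _ _)]
    simp
  rw [intervalIntegral.integral_const_mul] at hint
  rw [eq_div_iff hc.ne', mul_comm, hint]

lemma integral_mul_cos_mul_arctan_mul_cos (b : ℝ) :
    ∫ x in (0 : ℝ)..π, b * cos x * arctan (b * cos x) = π * (√(1 + b ^ 2) - 1) := by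
  have hu : ∀ x, HasDerivAt (fun x => arctan (b * cos x))
      (1 / (1 + (b * cos x) ^ 2) * (b * -sin x)) x := fun x =>
    ((hasDerivAt_cos x).const_mul b).arctan
  have hv : ∀ x, HasDerivAt (fun x => b * sin x) (b * cos x) x := fun x =>
    (hasDerivAt_sin x).const_mul b
  have hparts := intervalIntegral.integral_mul_deriv_eq_deriv_mul (a := 0) (b := π)
    (fun x _ => hu x) (fun x _ => hv x)
    (Continuous.intervalIntegrable (by fun_prop (disch := intro x; positivity)) _ _)
    (Continuous.intervalIntegrable (by fun_prop) _ _)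
  have hsplit : ∀ x, -(1 / (1 + (b * cos x) ^ 2) * (b * -sin x) * (b * sin x))
      = (1 + b ^ 2) * (1 / (1 + b ^ 2 * cos x ^ 2)) - 1 := fun x => by
    have : 0 < 1 + b ^ 2 * cos x ^ 2 := by positivity
    field_simp
    linear_combination b ^ 2 * sin_sq_add_cos_sq x
  simp only [sin_pi, sin_zero, mul_zero, sub_zero, zero_sub] at hparts
  rw [← intervalIntegral.integral_neg] at hparts
  simp only [hsplit] at hparts
  rw [intervalIntegral.integral_sub
      (Continuous.intervalIntegrable (by fun_prop (disch := intro x; positivity)) _ _)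
      intervalIntegrable_const, intervalIntegral.integral_const_mul,
    integral_one_div_one_add_sq_mul_cos_sq, integral_one] at hparts
  have hc : 0 < √(1 + b ^ 2) := sqrt_pos.2 (by positivity)
  simp_rw [mul_comm (b * cos _) (arctan _)]
  rw [hparts]
  field_simp
  linear_combination -π * sq_sqrt (show 0 ≤ 1 + b ^ 2 by positivity)

lemma integral_pi_mul_abs_cos_pi_mul : ∫ t in (0 : ℝ)..1, π * |cos (π * t)| = 2 := by
  rw [intervalIntegral.integral_const_mul,
    intervalIntegral.integral_comp_mul_left (fun x => |cos x|) pi_ne_zero]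
  simp only [mul_zero, mul_one, smul_eq_mul, integral_abs_cos_zero_pi]
  field_simp

lemma integral_mul_cos_pi_mul_arctan (b : ℝ) :
    ∫ t in (0 : ℝ)..1, b * cos (π * t) * arctan (b * cos (π * t)) = √(1 + b ^ 2) - 1 := by
  rw [intervalIntegral.integral_comp_mul_left (fun x => b * cos x * arctan (b * cos x)) pi_ne_zero]
  simp only [mul_zero, mul_one, smul_eq_mul, integral_mul_cos_mul_arctan_mul_cos]
  field_simp

/-- For the sine path `h(t) = m sin(πt)` with `m ∈ [0, 1]`, local speed
`s(t) = h'(t)/√(1 - h(t)²)`, the arcsine flux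
`J(h) = (1/2) ∫₀¹ D_arc(s(t)) √(1 - h(t)²) dt` equals `1`. -/
theorem sine_path_flux_eq_one (m : ℝ) (hm : m ∈ Set.Icc (0 : ℝ) 1) :
    (1 / 2) * ∫ t in Set.Icc (0 : ℝ) 1,
        Darc (π * m * Real.cos (π * t) / Real.sqrt (1 - m ^ 2 * Real.sin (π * t) ^ 2)) *
          Real.sqrt (1 - m ^ 2 * Real.sin (π * t) ^ 2) = 1 := by
  obtain ⟨hm0, hm1⟩ := hm
  rw [integral_Icc_eq_integral_Ioc, ← intervalIntegral.integral_of_le zero_le_one]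
  rcases hm1.lt_or_eq with hlt | rfl
  · set k := √(1 - m ^ 2)
    have hk : 0 < k := sqrt_pos.2 (by nlinarith)
    have hk2 : k ^ 2 = 1 - m ^ 2 := sq_sqrt (by nlinarith)
    have hpoint : ∀ t, Darc (π * m * cos (π * t) / √(1 - m ^ 2 * sin (π * t) ^ 2)) *
        √(1 - m ^ 2 * sin (π * t) ^ 2)
          = 2 * k * (m / k * cos (π * t) * arctan (m / k * cos (π * t)) + 1) := fun t => by
      rw [show 1 - m ^ 2 * sin (π * t) ^ 2 = (m * cos (π * t)) ^ 2 + k ^ 2 by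
          linear_combination -hk2 - m ^ 2 * sin_sq_add_cos_sq (π * t),
        mul_assoc π, Darc_mul_sqrt, arcsin_div_sqrt_sq_add_sq _ hk, add_sub_cancel_left,
        sqrt_sq hk.le]
      field_simp
    have hscale : √(1 + (m / k) ^ 2) = k⁻¹ := by
      rw [show 1 + (m / k) ^ 2 = k⁻¹ ^ 2 by field_simp; linear_combination hk2,
        sqrt_sq (inv_nonneg.2 hk.le)]
    simp only [hpoint]
    rw [intervalIntegral.integral_const_mul, intervalIntegral.integral_add
      (Continuous.intervalIntegrable (by fun_prop) _ _) intervalIntegrable_const,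
      integral_mul_cos_pi_mul_arctan, hscale, integral_one]
    field_simp
    ring
  · have hpoint : ∀ t, Darc (π * 1 * cos (π * t) / √(1 - 1 ^ 2 * sin (π * t) ^ 2)) *
        √(1 - 1 ^ 2 * sin (π * t) ^ 2) = π * |cos (π * t)| := fun t => by
      rw [one_pow, one_mul, mul_one, ← cos_sq', Darc_mul_sqrt, sub_self, sqrt_zero, mul_zero,
        add_zero, sqrt_sq_eq_abs, mul_assoc, mul_arcsin_div_abs]
      ring
    simp only [hpoint, integral_pi_mul_abs_cos_pi_mul]
    norm_num
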